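/- Let L : ℝ^{K·d} → ℝ be convex and differentiable, and let F : ℝ^N → ℝ^{K·d} be a differentiable map such that each coordinate F_j satisfies the first-order residual bound |F_j(θ') − F_j(θ) − ⟨∇F_j(θ), θ'−θ⟩| ≤ ρ for all θ, θ' in a set S. If additionally Σ_j |∂L/∂F_j| ≤ Λ at every point of S, then for all θ, θ' ∈ S: L(F(θ')) − L(F(θ)) ≥ ⟨∇_θ(L∘F)(θ), θ'−θ⟩ − Λρ, i.e. L∘F is (Λρ)-nearly convex on S. -/

import Mathlib

/-!
Convexity of `L` bounds `L (F θ') - L (F θ)` below by `⟪∇L (F θ), F θ' - F θ⟫`. Replacing each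
`F θ' j - F θ j` by its linearization `⟪∇F_j θ, θ' - θ⟫` costs at most `|∂_j L| ρ`, and these
costs add up to at most `Λ ρ`; the linearized pairing is the chain-rule gradient of `L ∘ F`.
-/

open scoped RealInnerProductSpace

theorem ConvexOn.add_fderiv_sub_le {E : Type*} [NormedAddCommGroup E] [NormedSpace ℝ E]
    {s : Set E} {f : E → ℝ} {f' : E →L[ℝ] ℝ} {x y : E}
    (hf : ConvexOn ℝ s f) (hx : x ∈ s) (hy : y ∈ s) (hf' : HasFDerivAt f f' x) :
    f x + f' (y - x) ≤ f y := by
  let φ : ℝ → ℝ := f ∘ AffineMap.lineMap x y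
  have hφ : ConvexOn ℝ (AffineMap.lineMap x y ⁻¹' s) φ := hf.comp_affineMap _
  have hφ' : HasDerivAt φ (f' (y - x)) 0 := by
    have hline : HasDerivAt (AffineMap.lineMap x y : ℝ → E) (y - x) 0 :=
      AffineMap.hasDerivAt_lineMap
    exact (by simpa using hf' : HasFDerivAt f f' (AffineMap.lineMap x y (0 : ℝ))).comp_hasDerivAt
      0 hline
  have hslope := hφ.le_slope_of_hasDerivAt (by simpa using hx) (by simpa using hy) one_pos hφ'
  simp only [slope, φ, Function.comp_apply, AffineMap.lineMap_apply_one,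
    AffineMap.lineMap_apply_zero, sub_zero, inv_one, vsub_eq_sub, one_smul] at hslope
  linarith

theorem ConvexOn.add_inner_sub_le_of_hasGradientAt {E : Type*} [NormedAddCommGroup E]
    [InnerProductSpace ℝ E] [CompleteSpace E] {s : Set E} {f : E → ℝ} {g x y : E}
    (hf : ConvexOn ℝ s f) (hx : x ∈ s) (hy : y ∈ s) (hg : HasGradientAt f g x) :
    f x + ⟪g, y - x⟫ ≤ f y := by
  simpa using hf.add_fderiv_sub_le hx hy hg.hasFDerivAt

theorem Finset.abs_sum_mul_sub_sum_mul_le {ι : Type*} (s : Finset ι) {a u v : ι → ℝ} {ρ : ℝ}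
    (h : ∀ j ∈ s, |u j - v j| ≤ ρ) :
    |∑ j ∈ s, a j * u j - ∑ j ∈ s, a j * v j| ≤ (∑ j ∈ s, |a j|) * ρ := by
  rw [← Finset.sum_sub_distrib, Finset.sum_mul]
  refine (Finset.abs_sum_le_sum_abs _ _).trans (Finset.sum_le_sum fun j hj => ?_)
  rw [← mul_sub, abs_mul]
  exact mul_le_mul_of_nonneg_left (h j hj) (abs_nonneg _)

theorem stmt_16_general {N q : ℕ} (ρ Λ : ℝ) (hρ : 0 ≤ ρ)
    (L : EuclideanSpace ℝ (Fin q) → ℝ)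
    (hconv : ConvexOn ℝ Set.univ L)
    (gL : EuclideanSpace ℝ (Fin q) → EuclideanSpace ℝ (Fin q))
    (hgL : ∀ y, HasGradientAt L (gL y) y)
    (F : EuclideanSpace ℝ (Fin N) → EuclideanSpace ℝ (Fin q))
    (gF : Fin q → EuclideanSpace ℝ (Fin N) → EuclideanSpace ℝ (Fin N))
    (S : Set (EuclideanSpace ℝ (Fin N)))
    (hres : ∀ θ ∈ S, ∀ θ' ∈ S, ∀ j,
      |F θ' j - F θ j - ⟪gF j θ, θ' - θ⟫| ≤ ρ)
    (hsum : ∀ θ ∈ S, (∑ j, |(gL (F θ)) j|) ≤ Λ) :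
    ∀ θ ∈ S, ∀ θ' ∈ S,
      L (F θ') - L (F θ) ≥ ⟪∑ j, (gL (F θ)) j • gF j θ, θ' - θ⟫ - Λ * ρ := by
  intro θ hθ θ' hθ'
  set a := gL (F θ)
  have houter : L (F θ) + ∑ j, a j * (F θ' j - F θ j) ≤ L (F θ') := by
    simpa [PiLp.inner_apply, mul_comm] using
      hconv.add_inner_sub_le_of_hasGradientAt trivial trivial (hgL (F θ)) (y := F θ')
  have hchain : ⟪∑ j, a j • gF j θ, θ' - θ⟫ = ∑ j, a j * ⟪gF j θ, θ' - θ⟫ := by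
    simp only [sum_inner, real_inner_smul_left]
  have hlinear := (abs_le.1 <| Finset.abs_sum_mul_sub_sum_mul_le Finset.univ (a := a)
    (u := fun j => F θ' j - F θ j) (v := fun j => ⟪gF j θ, θ' - θ⟫)
    fun j _ => hres θ hθ θ' hθ' j).1
  have hΛ : (∑ j, |a j|) * ρ ≤ Λ * ρ := mul_le_mul_of_nonneg_right (hsum θ hθ) hρ
  linarith

/-- a convex differentiable outer function composed with a
nearly-linear inner map is nearly convex: if each coordinate of `F` has
first-order residual at most `ρ` on `S` and `Σ_j |∂L/∂F_j| ≤ Λ` on `S`, then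
`L∘F` is `(Λρ)`-nearly convex on `S` (the gradient of `L∘F` at `θ` being
`Σ_j (∂L/∂F_j) • ∇F_j(θ)` by the chain rule). -/
theorem stmt_16 {N q : ℕ} (ρ Λ : ℝ) (hρ : 0 ≤ ρ) (hΛ : 0 ≤ Λ)
    (L : EuclideanSpace ℝ (Fin q) → ℝ)
    (hconv : ConvexOn ℝ Set.univ L)
    (gL : EuclideanSpace ℝ (Fin q) → EuclideanSpace ℝ (Fin q))
    (hgL : ∀ y, HasGradientAt L (gL y) y)
    (F : EuclideanSpace ℝ (Fin N) → EuclideanSpace ℝ (Fin q))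
    (gF : Fin q → EuclideanSpace ℝ (Fin N) → EuclideanSpace ℝ (Fin N))
    (hgF : ∀ j θ, HasGradientAt (fun θ' => F θ' j) (gF j θ) θ)
    (S : Set (EuclideanSpace ℝ (Fin N)))
    (hres : ∀ θ ∈ S, ∀ θ' ∈ S, ∀ j,
      |F θ' j - F θ j - ⟪gF j θ, θ' - θ⟫| ≤ ρ)
    (hsum : ∀ θ ∈ S, (∑ j, |(gL (F θ)) j|) ≤ Λ) :
    ∀ θ ∈ S, ∀ θ' ∈ S,
      L (F θ') - L (F θ) ≥ ⟪∑ j, (gL (F θ)) j • gF j θ, θ' - θ⟫ - Λ * ρ :=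
  stmt_16_general ρ Λ hρ L hconv gL hgL F gF S hres hsum
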